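/- (Top-index criterion of type D, k ≤ n−2.) Let n ≥ 3 and 1 ≤ k ≤ n−2, and let a_1,…,a_n be nonnegative integers. Then for every integer t, the number of positive roots α ∈ Φ⁺_D with ⟨w(t), α⟩ < 0 equals k(4n−1−3k)/2 (the dimension of the isotropic Grassmannian D_n/P(α_k)) if and only if t > M^D_{k,a}. -/

import Mathlib

open Finset

/-- The positive roots of type `Dₙ`: `eₚ+e_q` and `eₚ-e_q` (`p<q`). -/
def PhiD (n : ℕ) : Set (Fin n → ℝ) :=
  {α | ∃ p q : Fin n, p < q ∧
      α = fun i => (if i = p then (1:ℝ) else 0) + (if i = q then 1 else 0)} ∪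
  {α | ∃ p q : Fin n, p < q ∧
      α = fun i => (if i = p then (1:ℝ) else 0) - (if i = q then 1 else 0)}

/-- Standard inner product on `ℝⁿ`. -/
noncomputable def ip (n : ℕ) (v w : Fin n → ℝ) : ℝ := ∑ i, v i * w i

/-- The coordinate form of the weight `λ+ρ-tλ_k` for type `Dₙ`, `k ≤ n-2`
(coordinates are indexed one-based). -/
noncomputable def wD (n k : ℕ) (a : ℕ → ℤ) (t : ℤ) : Fin n → ℝ := fun i =>
  if i.val + 1 = n then ((a n : ℝ) - (a (n - 1) : ℝ)) / 2
  else (∑ u ∈ Icc (i.val + 1) (n - 2), (a u : ℝ)) + ((a (n - 1) : ℝ) + (a n : ℝ)) / 2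
    + ((n : ℝ) - (i.val + 1)) - (if i.val + 1 ≤ k then (t : ℝ) else 0)

/-- `M^D_{k,a}`, the largest entry of the step matrix. -/
def MD (n k : ℕ) (a : ℕ → ℤ) : ℤ :=
  (∑ u ∈ Icc 1 n, a u) + (∑ u ∈ Icc (k + 1) (n - 2), a u)
    + 2 * (n : ℤ) - (k : ℤ) - 2

/-!
Pairing `w = w(t)` with `e_p ± e_q` (`p < q`) gives `w_p ± w_q`. Since the `a_u` are nonnegative,
the coordinates of `w(0) = λ + ρ` satisfy `w_1 > ⋯ > w_{n-1} > |w_n|`, and subtracting `t` from the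
first `k` of them keeps each block ordered. Hence only the roots `e_p + e_q` with `p ≤ k` and
`e_p - e_q` with `p ≤ k < q` can pair negatively, and there are `k(4n-1-3k)/2` of them.
If `t > M`, then for `p ≤ k` we get `w_p ≤ w_1 = M - t - w_{k+1} < -w_{k+1} ≤ -|w_q|` for all
`q > k`, so all of them are negative; if `t ≤ M`, the root `e_1 + e_{k+1}` pairs to `M - t ≥ 0`.
-/

section Roots

variable {n : ℕ}

lemma single_add_single_injOn :
    Set.InjOn (fun x : Fin n × Fin n => (Pi.single x.1 1 + Pi.single x.2 1 : Fin n → ℝ))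
      {x | x.1 < x.2} := by
  rintro ⟨p, q⟩ hpq ⟨p', q'⟩ hpq' h
  have h1 := congrFun h p
  have h2 := congrFun h q
  have h3 := congrFun h p'
  simp only [Set.mem_ofPred_eq, Pi.add_apply, Pi.single_apply] at hpq hpq' h1 h2 h3
  grind

lemma single_sub_single_injOn :
    Set.InjOn (fun x : Fin n × Fin n => (Pi.single x.1 1 - Pi.single x.2 1 : Fin n → ℝ))
      {x | x.1 < x.2} := by
  rintro ⟨p, q⟩ hpq ⟨p', q'⟩ hpq' h
  have h1 := congrFun h p
  have h2 := congrFun h q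
  simp only [Set.mem_ofPred_eq, Pi.sub_apply, Pi.single_apply] at hpq hpq' h1 h2
  grind

lemma phiD_eq_image_union : PhiD n =
    (fun x : Fin n × Fin n => (Pi.single x.1 1 + Pi.single x.2 1 : Fin n → ℝ)) ''
        {x | x.1 < x.2} ∪
      (fun x : Fin n × Fin n => (Pi.single x.1 1 - Pi.single x.2 1 : Fin n → ℝ)) ''
        {x | x.1 < x.2} := by
  have hplus (p q : Fin n) : (fun i => (if i = p then (1 : ℝ) else 0) + if i = q then 1 else 0) =
      Pi.single p 1 + Pi.single q 1 := by
    ext i; simp [Pi.single_apply]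
  have hminus (p q : Fin n) : (fun i => (if i = p then (1 : ℝ) else 0) - if i = q then 1 else 0) =
      Pi.single p 1 - Pi.single q 1 := by
    ext i; simp [Pi.single_apply]
  ext α
  simp only [PhiD, hplus, hminus, Set.mem_union, Set.mem_ofPred_eq, Set.mem_image, Prod.exists,
    eq_comm (a := α)]

lemma ip_single_add_single (v : Fin n → ℝ) (p q : Fin n) :
    ip n v (Pi.single p 1 + Pi.single q 1) = v p + v q := by
  change v ⬝ᵥ (Pi.single p 1 + Pi.single q 1) = _
  simp only [dotProduct_add, dotProduct_single, mul_one]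

lemma ip_single_sub_single (v : Fin n → ℝ) (p q : Fin n) :
    ip n v (Pi.single p 1 - Pi.single q 1) = v p - v q := by
  change v ⬝ᵥ (Pi.single p 1 - Pi.single q 1) = _
  simp only [dotProduct_sub, dotProduct_single, mul_one]

lemma ncard_setOf_ip_neg (v : Fin n → ℝ) :
    {α ∈ PhiD n | ip n v α < 0}.ncard =
      #{x : Fin n × Fin n | x.1 < x.2 ∧ v x.1 + v x.2 < 0} +
        #{x : Fin n × Fin n | x.1 < x.2 ∧ v x.1 < v x.2} := by
  set plus := fun x : Fin n × Fin n => (Pi.single x.1 1 + Pi.single x.2 1 : Fin n → ℝ)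
  set minus := fun x : Fin n × Fin n => (Pi.single x.1 1 - Pi.single x.2 1 : Fin n → ℝ)
  have hS : {α ∈ PhiD n | ip n v α < 0} =
      ↑(image plus {x | x.1 < x.2 ∧ v x.1 + v x.2 < 0} ∪
        image minus {x | x.1 < x.2 ∧ v x.1 < v x.2}) := by
    ext α
    simp only [phiD_eq_image_union, Set.mem_ofPred_eq, Set.mem_union, Set.mem_image, coe_union,
      coe_image, coe_filter, mem_univ, true_and]
    constructor
    · rintro ⟨⟨x, hx, rfl⟩ | ⟨x, hx, rfl⟩, hneg⟩
      · rw [ip_single_add_single] at hneg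
        exact Or.inl ⟨x, ⟨hx, hneg⟩, rfl⟩
      · rw [ip_single_sub_single, sub_neg] at hneg
        exact Or.inr ⟨x, ⟨hx, hneg⟩, rfl⟩
    · rintro (⟨x, ⟨hx, hneg⟩, rfl⟩ | ⟨x, ⟨hx, hneg⟩, rfl⟩)
      · exact ⟨Or.inl ⟨x, hx, rfl⟩, by rwa [ip_single_add_single]⟩
      · exact ⟨Or.inr ⟨x, hx, rfl⟩, by rwa [ip_single_sub_single, sub_neg]⟩
  -- `e_p + e_q` has coordinate sum 2, `e_p - e_q` has coordinate sum 0
  have hdisj : Disjoint (image plus {x | x.1 < x.2 ∧ v x.1 + v x.2 < 0})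
      (image minus {x | x.1 < x.2 ∧ v x.1 < v x.2}) := by
    simp only [disjoint_left, mem_image]
    rintro _ ⟨x, -, rfl⟩ ⟨y, -, h⟩
    have := congrArg (ip n 1) h
    norm_num [plus, minus, ip_single_add_single, ip_single_sub_single] at this
  rw [hS, Set.ncard_coe_finset, card_union_of_disjoint hdisj, card_image_of_injOn,
    card_image_of_injOn]
  · exact single_sub_single_injOn.mono fun x hx => (mem_filter.1 hx).2.1
  · exact single_add_single_injOn.mono fun x hx => (mem_filter.1 hx).2.1

end Roots

lemma card_filter_prod_and {α β : Type*} [Fintype α] [Fintype β] (P : α → Prop)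
    (Q : α → β → Prop) [DecidablePred P] [∀ a, DecidablePred (Q a)] :
    #{x : α × β | P x.1 ∧ Q x.1 x.2} = ∑ a with P a, #{b | Q a b} := by
  simp only [card_filter, Fintype.sum_prod_type, sum_filter, ite_and, sum_ite_irrel,
    sum_const_zero]

lemma Fin.sum_filter_val_lt {M : Type*} [AddCommMonoid M] {n k : ℕ} (hk : k ≤ n) (f : ℕ → M) :
    ∑ p : Fin n with p.val < k, f p = ∑ p ∈ range k, f p := by
  have : ({p : Fin n | p.val < k} : Finset (Fin n)).map Fin.valEmbedding = range k := by
    ext p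
    simp only [mem_map, mem_filter, mem_univ, true_and, Fin.valEmbedding_apply, mem_range]
    exact ⟨fun ⟨q, hq, hqp⟩ => hqp ▸ hq, fun hp => ⟨⟨p, by omega⟩, hp, rfl⟩⟩
  rw [← this, sum_map]
  rfl

lemma Fin.card_filter_le_val {n k : ℕ} (hk : k ≤ n) : #{q : Fin n | k ≤ q.val} = n - k := by
  have := card_filter_add_card_filter_not (s := (univ : Finset (Fin n))) (fun q => q.val < k)
  simp only [not_lt, Fin.card_filter_val_lt, card_univ, Fintype.card_fin] at this
  omega

lemma two_mul_sum_range_sub (c : ℤ) (j : ℕ) :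
    2 * ∑ p ∈ range j, (c - p) = j * (2 * c - j + 1) := by
  induction j with
  | zero => simp
  | succ j ih => rw [sum_range_succ, mul_add, ih]; push_cast; ring

lemma two_mul_card_pairs_fst_lt {n k : ℕ} (hk : k ≤ n) :
    2 * (#{x : Fin n × Fin n | x.1.val < k ∧ x.1 < x.2} +
      #{x : Fin n × Fin n | x.1.val < k ∧ k ≤ x.2.val}) = k * (4 * n - 1 - 3 * k) := by
  rw [card_filter_prod_and (fun p : Fin n => p.val < k) (· < ·),
    card_filter_prod_and (fun p : Fin n => p.val < k) fun (_ q : Fin n) => k ≤ q.val,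
    ← sum_add_distrib]
  simp only [filter_lt_eq_Ioi, Fin.card_Ioi, Fin.card_filter_le_val hk]
  rw [Fin.sum_filter_val_lt hk fun p => n - 1 - p + (n - k)]
  rcases k.eq_zero_or_pos with rfl | hk0
  · simp
  have hsummand : ∀ p ∈ range k,
      ((n - 1 - p : ℕ) + (n - k : ℕ) : ℤ) = (2 * n - 1 - k : ℤ) - p := by
    intro p hp
    rw [mem_range] at hp
    push_cast [show p ≤ n - 1 by omega, show 1 ≤ n by omega, hk]
    ring
  zify [show 3 * k ≤ 4 * n - 1 by omega, show 1 ≤ 4 * n by omega]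
  rw [sum_congr rfl hsummand, two_mul_sum_range_sub]
  ring

/-- Coordinate `p + 1` of `λ + ρ` (that is, coordinate `p` in the 0-based indexing of `wD`), for
`p ≤ n - 2`. -/
noncomputable def wBase (n : ℕ) (a : ℕ → ℤ) (p : ℕ) : ℝ :=
  ∑ u ∈ Icc (p + 1) (n - 2), (a u : ℝ) + ((a (n - 1) : ℝ) + a n) / 2 + ((n : ℝ) - (p + 1))

section Weights

variable {n k : ℕ} {a : ℕ → ℤ} {t : ℤ}

lemma MD_eq_wBase_add_wBase (hn : 2 ≤ n) : (MD n k a : ℝ) = wBase n a 0 + wBase n a k := by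
  obtain ⟨m, rfl⟩ : ∃ m, n = m + 2 := ⟨n - 2, by omega⟩
  simp only [MD, wBase, Nat.add_sub_cancel, zero_add]
  rw [sum_Icc_succ_top (by omega), sum_Icc_succ_top (by omega)]
  push_cast
  ring

lemma wD_eq_wBase {i : Fin n} (hki : k ≤ i.val) (hi : i.val + 1 ≠ n) :
    wD n k a t i = wBase n a i := by
  simp only [wD, hi, if_false, show ¬i.val + 1 ≤ k by omega, sub_zero]
  rfl

lemma wD_eq_wBase_sub {i : Fin n} (hik : i.val < k) (hkn : k < n) :
    wD n k a t i = wBase n a i - t := by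
  simp only [wD, show i.val + 1 ≠ n by omega, show i.val + 1 ≤ k from hik, if_false, if_true]
  rfl

lemma wD_last {i : Fin n} (hi : i.val + 1 = n) :
    wD n k a t i = ((a n : ℝ) - a (n - 1)) / 2 := by
  rw [wD, if_pos hi]

lemma sub_le_wBase_sub_wBase (ha : ∀ u, 1 ≤ u → u ≤ n → 0 ≤ a u) {p q : ℕ} (hpq : p ≤ q) :
    (q : ℝ) - p ≤ wBase n a p - wBase n a q := by
  have hsum : ∑ u ∈ Icc (q + 1) (n - 2), (a u : ℝ) ≤ ∑ u ∈ Icc (p + 1) (n - 2), (a u : ℝ) :=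
    sum_le_sum_of_subset_of_nonneg (Icc_subset_Icc (by omega) le_rfl) fun u hu _ => by
      rw [mem_Icc] at hu
      exact_mod_cast ha u (by omega) (by omega)
  simp only [wBase]
  linarith

lemma abs_sub_div_two_lt_wBase (ha : ∀ u, 1 ≤ u → u ≤ n → 0 ≤ a u) {p : ℕ} (hp : p + 2 ≤ n) :
    |((a n : ℝ) - a (n - 1)) / 2| < wBase n a p := by
  have hsum : 0 ≤ ∑ u ∈ Icc (p + 1) (n - 2), (a u : ℝ) := sum_nonneg fun u hu => by
    rw [mem_Icc] at hu
    exact_mod_cast ha u (by omega) (by omega)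
  have han : (0 : ℝ) ≤ a n := by exact_mod_cast ha n (by omega) le_rfl
  have han1 : (0 : ℝ) ≤ a (n - 1) := by exact_mod_cast ha (n - 1) (by omega) (by omega)
  have hpn : (p : ℝ) + 2 ≤ n := by exact_mod_cast hp
  rw [abs_lt, wBase]
  constructor <;> linarith

lemma wBase_pos (ha : ∀ u, 1 ≤ u → u ≤ n → 0 ≤ a u) {p : ℕ} (hp : p + 2 ≤ n) :
    0 < wBase n a p :=
  (abs_nonneg _).trans_lt (abs_sub_div_two_lt_wBase ha hp)

lemma abs_wD_lt_wD (ha : ∀ u, 1 ≤ u → u ≤ n → 0 ≤ a u) {p q : Fin n} (hkp : k ≤ p.val)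
    (hpq : p < q) : |wD n k a t q| < wD n k a t p := by
  have hpq' : p.val < q.val := hpq
  rw [wD_eq_wBase hkp (by omega)]
  by_cases hq : q.val + 1 = n
  · rw [wD_last hq]
    exact abs_sub_div_two_lt_wBase ha (by omega)
  · have hpq'' : (p.val : ℝ) + 1 ≤ q.val := by exact_mod_cast hpq'
    have := sub_le_wBase_sub_wBase ha hpq'.le
    rw [wD_eq_wBase (hkp.trans hpq'.le) hq, abs_of_pos (wBase_pos ha (by omega))]
    linarith

lemma wD_lt_wD_of_lt (ha : ∀ u, 1 ≤ u → u ≤ n → 0 ≤ a u) (hkn : k < n) {p q : Fin n}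
    (hpq : p < q) (hqk : q.val < k) : wD n k a t q < wD n k a t p := by
  have hpq' : p.val < q.val := hpq
  have hpq'' : (p.val : ℝ) + 1 ≤ q.val := by exact_mod_cast hpq'
  have := sub_le_wBase_sub_wBase ha hpq'.le
  rw [wD_eq_wBase_sub hqk hkn, wD_eq_wBase_sub (hpq'.trans hqk) hkn]
  linarith

lemma abs_wD_le_wBase (ha : ∀ u, 1 ≤ u → u ≤ n → 0 ≤ a u) (hkn : k + 2 ≤ n) {q : Fin n}
    (hkq : k ≤ q.val) : |wD n k a t q| ≤ wBase n a k := by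
  by_cases hq : q.val + 1 = n
  · rw [wD_last hq]
    exact (abs_sub_div_two_lt_wBase ha hkn).le
  · have hkq' : (k : ℝ) ≤ q.val := by exact_mod_cast hkq
    have := sub_le_wBase_sub_wBase ha hkq
    rw [wD_eq_wBase hkq hq, abs_of_pos (wBase_pos ha (by omega))]
    linarith

lemma wD_add_wD_eq_MD_sub (hk : 0 < k) (hkn : k + 2 ≤ n) :
    wD n k a t ⟨0, by omega⟩ + wD n k a t ⟨k, by omega⟩ = MD n k a - t := by
  rw [wD_eq_wBase_sub hk (by omega), wD_eq_wBase (i := ⟨k, by omega⟩) le_rfl (by simp; omega),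
    MD_eq_wBase_add_wBase (by omega)]
  ring

lemma wD_lt_neg_wBase (ha : ∀ u, 1 ≤ u → u ≤ n → 0 ≤ a u) (hkn : k < n)
    (ht : MD n k a < t) {p : Fin n} (hpk : p.val < k) : wD n k a t p < -wBase n a k := by
  have hp : (0 : ℝ) ≤ p.val := p.val.cast_nonneg
  have := sub_le_wBase_sub_wBase ha p.val.zero_le
  have hMt : (MD n k a : ℝ) < t := by exact_mod_cast ht
  rw [MD_eq_wBase_add_wBase (by omega)] at hMt
  rw [wD_eq_wBase_sub hpk hkn]
  push_cast at this
  linarith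

lemma val_lt_of_wD_add_wD_neg (ha : ∀ u, 1 ≤ u → u ≤ n → 0 ≤ a u) {p q : Fin n} (hpq : p < q)
    (h : wD n k a t p + wD n k a t q < 0) : p.val < k := by
  by_contra! hkp
  linarith [abs_wD_lt_wD ha hkp hpq (t := t), neg_abs_le (wD n k a t q)]

lemma val_lt_and_le_of_wD_lt_wD (ha : ∀ u, 1 ≤ u → u ≤ n → 0 ≤ a u) (hkn : k + 2 ≤ n)
    {p q : Fin n} (hpq : p < q) (h : wD n k a t p < wD n k a t q) :
    p.val < k ∧ k ≤ q.val := by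
  by_contra! hpkq
  by_cases hkp : k ≤ p.val
  · linarith [abs_wD_lt_wD ha hkp hpq (t := t), le_abs_self (wD n k a t q)]
  · linarith [wD_lt_wD_of_lt ha (by omega) hpq (hpkq (by omega)) (t := t)]

lemma wD_add_wD_neg_of_MD_lt (ha : ∀ u, 1 ≤ u → u ≤ n → 0 ≤ a u) (hkn : k + 2 ≤ n)
    (ht : MD n k a < t) {p q : Fin n} (hpk : p.val < k) : wD n k a t p + wD n k a t q < 0 := by
  have hp := wD_lt_neg_wBase ha (by omega) ht hpk
  have hk := wBase_pos ha hkn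
  by_cases hqk : q.val < k
  · linarith [wD_lt_neg_wBase ha (by omega) ht hqk]
  · linarith [le_abs_self (wD n k a t q), abs_wD_le_wBase ha hkn (not_lt.1 hqk) (t := t)]

lemma wD_lt_wD_of_MD_lt (ha : ∀ u, 1 ≤ u → u ≤ n → 0 ≤ a u) (hkn : k + 2 ≤ n)
    (ht : MD n k a < t) {p q : Fin n} (hpk : p.val < k) (hkq : k ≤ q.val) :
    wD n k a t p < wD n k a t q := by
  linarith [wD_lt_neg_wBase ha (by omega) ht hpk, neg_abs_le (wD n k a t q),
    abs_wD_le_wBase ha hkn hkq (t := t)]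

end Weights

lemma card_add_card_eq_iff {α : Type*} {s s' t t' : Finset α} (hs : s ⊆ s') (ht : t ⊆ t') :
    #s + #t = #s' + #t' ↔ s = s' ∧ t = t' := by
  refine ⟨fun h => ?_, fun ⟨hs', ht'⟩ => hs' ▸ ht' ▸ rfl⟩
  have := card_le_card hs
  have := card_le_card ht
  exact ⟨eq_of_subset_of_card_le hs (by omega), eq_of_subset_of_card_le ht (by omega)⟩

theorem top_index_criterion_D_lt_general (n k : ℕ) (hk1 : 1 ≤ k) (hkn : k ≤ n - 2)
    (a : ℕ → ℤ) (ha : ∀ u, 1 ≤ u → u ≤ n → 0 ≤ a u) (t : ℤ) :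
    {α ∈ PhiD n | ip n (wD n k a t) α < 0}.ncard = k * (4 * n - 1 - 3 * k) / 2 ↔
      MD n k a < t := by
  have hk2 : k + 2 ≤ n := by omega
  set w := wD n k a t
  set Gplus := univ.filter fun x : Fin n × Fin n => x.1.val < k ∧ x.1 < x.2
  set Gminus := univ.filter fun x : Fin n × Fin n => x.1.val < k ∧ k ≤ x.2.val
  have hplus : univ.filter (fun x : Fin n × Fin n => x.1 < x.2 ∧ w x.1 + w x.2 < 0) ⊆ Gplus :=
    monotone_filter_right _ fun x _ hx => ⟨val_lt_of_wD_add_wD_neg ha hx.1 hx.2, hx.1⟩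
  have hminus : univ.filter (fun x : Fin n × Fin n => x.1 < x.2 ∧ w x.1 < w x.2) ⊆ Gminus :=
    monotone_filter_right _ fun x _ hx => val_lt_and_le_of_wD_lt_wD ha hk2 hx.1 hx.2
  rw [ncard_setOf_ip_neg, ← two_mul_card_pairs_fst_lt (by omega : k ≤ n),
    Nat.mul_div_cancel_left _ two_pos, card_add_card_eq_iff hplus hminus]
  constructor
  · rintro ⟨hplus_eq, -⟩
    by_contra! ht
    have hmem : ((⟨0, by omega⟩, ⟨k, by omega⟩) : Fin n × Fin n) ∈ Gplus := by
      simp only [Gplus, mem_filter, mem_univ, true_and, Fin.mk_lt_mk]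
      omega
    rw [← hplus_eq, mem_filter, wD_add_wD_eq_MD_sub hk1 hk2] at hmem
    have : (t : ℝ) ≤ MD n k a := by exact_mod_cast ht
    linarith [hmem.2.2]
  · intro ht
    exact ⟨hplus.antisymm <| monotone_filter_right _ fun x _ hx =>
        ⟨hx.2, wD_add_wD_neg_of_MD_lt ha hk2 ht hx.1⟩,
      hminus.antisymm <| monotone_filter_right _ fun x _ hx =>
        ⟨Fin.lt_def.2 (by omega), wD_lt_wD_of_MD_lt ha hk2 ht hx.1 hx.2⟩⟩

/-- Top-index criterion of type `D`, `k ≤ n-2`: `λ+ρ-tλ_k` is regular of index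
`dim Dₙ/P(α_k) = k(4n-1-3k)/2` iff `t > M^D_{k,a}`. -/
theorem top_index_criterion_D_lt (n k : ℕ) (hn : 3 ≤ n) (hk1 : 1 ≤ k) (hkn : k ≤ n - 2)
    (a : ℕ → ℤ) (ha : ∀ u, 1 ≤ u → u ≤ n → 0 ≤ a u) (t : ℤ) :
    {α ∈ PhiD n | ip n (wD n k a t) α < 0}.ncard = k * (4 * n - 1 - 3 * k) / 2 ↔
      MD n k a < t :=
  top_index_criterion_D_lt_general n k hk1 hkn a ha t
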